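/- arXiv:2112.14795 — 3 statements merged into one kernel-verified Lean document; each statement's English description precedes it below -/
import Mathlib

section
/- Let T be a cluster of the n-gon (a maximal set of pairwise noncrossing arcs of {1,...,n}), let Φ be the arc map induced by φ(k) = k − ⌈n/2⌉, and let L = {(−i, i), (−i, i+1) : i ≥ ⌈n/2⌉, i odd}. Then the set Φ(T) ∪ {(φ(1), φ(n))} ∪ L is a pairwise noncrossing set of arcs of the infinity-gon. -/
def Cross {E : Type*} [LinearOrder E] (p q : E × E) : Prop :=
  (p.1 < q.1 ∧ q.1 < p.2 ∧ p.2 < q.2) ∨ (q.1 < p.1 ∧ p.1 < q.2 ∧ q.2 < p.2)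

def ArcN (n : ℤ) (p : ℤ × ℤ) : Prop :=
  1 ≤ p.1 ∧ p.2 ≤ n ∧ 2 ≤ p.2 - p.1 ∧ p.2 - p.1 ≤ n - 1

/-- Pairwise noncrossing set of arcs. -/
def Noncrossing {E : Type*} [LinearOrder E] (T : Set (E × E)) : Prop :=
  ∀ p ∈ T, ∀ q ∈ T, ¬ Cross p q

/-- The image of a cluster of the `n`-gon under `Φ` induced by `φ(k) = k - ⌈n/2⌉`,
together with `(φ(1), φ(n))` and the ladder `L`, is pairwise noncrossing. -/
theorem stmt8 (n : ℤ) (hn : 2 ≤ n) (T : Set (ℤ × ℤ))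
    (hTarc : ∀ p ∈ T, ArcN n p) (hTnc : Noncrossing T)
    (hTmax : ∀ U : Set (ℤ × ℤ), (∀ p ∈ U, ArcN n p) → Noncrossing U → T ⊆ U → U = T) :
    Noncrossing
      (((fun p : ℤ × ℤ => (p.1 - (n + 1) / 2, p.2 - (n + 1) / 2)) '' T) ∪
        {(1 - (n + 1) / 2, n - (n + 1) / 2)} ∪
        {p : ℤ × ℤ | ∃ i : ℤ, (n + 1) / 2 ≤ i ∧ Odd i ∧
          (p = (-i, i) ∨ p = (-i, i + 1))}) := by
  intro p hp q hq hcross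
  simp only [Set.mem_union, Set.mem_image, Set.mem_singleton_iff, Set.mem_setOf_eq] at hp hq
  rcases hp with (⟨t, ht, rfl⟩ | rfl) | ⟨i, hi, -, (rfl | rfl)⟩ <;>
    rcases hq with (⟨s, hs, rfl⟩ | rfl) | ⟨j, hj, -, (rfl | rfl)⟩ <;>
    simp only [Cross] at hcross <;>
    (try (have h1 := hTarc t ht; simp only [ArcN] at h1)) <;>
    (try (have h2 := hTarc s hs; simp only [ArcN] at h2)) <;>
    first
      | exact hTnc t ht s hs (by simp only [Cross]; omega)
      | omega
end

section
/- The set L = {(−i, i) : i ≥ 1 odd} ∪ {(−i, i+1) : i ≥ 1 odd} of arcs of the infinity-gon is pairwise noncrossing, and every integer point outside the interval [−1, 2] is 'separated from infinity' in the sense that any arc (a,b) of the infinity-gon with b − a sufficiently large crosses some arc of L; in particular L has no left-fountain and no right-fountain. -/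
/-- The ladder `L = {(−i,i), (−i,i+1) : i ≥ 1 odd}` of arcs of the infinity-gon. -/
def ladder : Set (ℤ × ℤ) :=
  {p : ℤ × ℤ | ∃ i : ℤ, 1 ≤ i ∧ Odd i ∧ (p = (-i, i) ∨ p = (-i, i + 1))}

/-- `L` is pairwise noncrossing, every arc `(a,b)` with `b` sufficiently large crosses some
arc of `L`, and `L` has no right-fountain and no left-fountain at any point. -/
theorem stmt9 :
    (∀ p ∈ ladder, ∀ q ∈ ladder, ¬ Cross p q) ∧
    (∀ a : ℤ, ∃ N : ℤ, ∀ b : ℤ, N ≤ b → 2 ≤ b - a → ∃ q ∈ ladder, Cross (a, b) q) ∧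
    (∀ k : ℤ, {i : ℤ | k + 2 ≤ i ∧ (k, i) ∈ ladder}.Finite ∧
      {i : ℤ | i ≤ k - 2 ∧ (i, k) ∈ ladder}.Finite) := by
  refine ⟨?_, ?_, ?_⟩
  · rintro p ⟨i, hi1, ⟨m, hm⟩, hp | hp⟩ q ⟨j, hj1, ⟨n, hn⟩, hq | hq⟩ <;>
      subst hp <;> subst hq <;> rintro (⟨h1, h2, h3⟩ | ⟨h1, h2, h3⟩) <;>
      simp only at h1 h2 h3 <;> omega
  · intro a
    refine ⟨2 * |a| + 2, fun b hb _ => ⟨(-(2 * |a| + 1), 2 * |a| + 1),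
      ⟨2 * |a| + 1, by linarith [abs_nonneg a], ⟨|a|, by ring⟩, Or.inl rfl⟩, Or.inr ?_⟩⟩
    have h1 := abs_nonneg a
    have h2 := le_abs_self a
    have h3 := neg_abs_le a
    simp only
    omega
  · intro k
    constructor
    · apply Set.Finite.subset (Set.toFinite {(-k : ℤ), -k + 1})
      rintro i ⟨_, j, hj1, _, hp | hp⟩ <;> injection hp with h1 h2 <;>
        simp only [Set.mem_insert_iff, Set.mem_singleton_iff] <;> omega
    · apply Set.Finite.subset (Set.toFinite {(-k : ℤ), -k + 1})
      rintro i ⟨_, j, hj1, _, hp | hp⟩ <;> injection hp with h1 h2 <;>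
        simp only [Set.mem_insert_iff, Set.mem_singleton_iff] <;> omega
end

section
/- Let T be a maximal noncrossing set of arcs of the infinity-gon. If T has a right-fountain at k (infinitely many arcs (k,i) ∈ T with i ≥ k+2) and a right-fountain at k' with k ≠ k', then T contains two crossing arcs — contradiction; hence T has at most one right-fountain. -/
/-- `T` has a right-fountain at `k`: infinitely many arcs `(k,i) ∈ T` with `i ≥ k + 2`. -/
def RightFountain (T : Set (ℤ × ℤ)) (k : ℤ) : Prop :=
  {i : ℤ | k + 2 ≤ i ∧ (k, i) ∈ T}.Infinite

/-- A maximal noncrossing set of arcs of the infinity-gon has at most one right-fountain: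
right-fountains at `k ≠ k'` would force two crossing arcs in `T`. -/
theorem stmt17 (T : Set (ℤ × ℤ))
    (hTarc : ∀ p ∈ T, 2 ≤ p.2 - p.1)
    (hTnc : ∀ p ∈ T, ∀ q ∈ T, ¬ Cross p q)
    (hTmax : ∀ U : Set (ℤ × ℤ), (∀ p ∈ U, 2 ≤ p.2 - p.1) →
      (∀ p ∈ U, ∀ q ∈ U, ¬ Cross p q) → T ⊆ U → U = T)
    (k k' : ℤ) (hk : RightFountain T k) (hk' : RightFountain T k') (hne : k ≠ k') :
    ∃ p ∈ T, ∃ q ∈ T, Cross p q := by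
  have unbdd : ∀ m : ℤ, RightFountain T m → ∀ n : ℤ,
      ∃ i, (m + 2 ≤ i ∧ (m, i) ∈ T) ∧ n < i := by
    intro m hm n
    by_contra hc
    push_neg at hc
    apply hm
    apply Set.Finite.subset (Set.finite_Icc (m + 2) n)
    intro i hi
    exact ⟨hi.1, hc i hi⟩
  have key : ∀ a b : ℤ, a < b → RightFountain T a → RightFountain T b →
      ∃ p ∈ T, ∃ q ∈ T, Cross p q := by
    intro a b hab ha hb
    obtain ⟨i, hi, hib⟩ := unbdd a ha b
    obtain ⟨j, hj, hji⟩ := unbdd b hb i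
    exact ⟨(a, i), hi.2, (b, j), hj.2, Or.inl ⟨hab, hib, hji⟩⟩
  rcases hne.lt_or_gt with h | h
  · exact key k k' h hk hk'
  · exact key k' k h hk' hk
end
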